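/- Acceptability of an assumption under the preferred semantics is an implicative property in frameworks with at least 4 assumptions: with base rules R = {contrary(C) ← A, D ← A}, witness rules R_1 = {contrary(B) ← C}, R_2 = {contrary(A) ← B}, R_3 = {contrary(C) ← D}, the assumption B belongs to some preferred extension of the framework with rule set R ∪ S for every S ⊆ {R_1, R_2, R_3} except S = {R_1, R_2}, in which case B belongs to no preferred extension. -/

import Mathlib

/-- A Bipolar ABA rule `head ← body` (body is a single assumption). -/
structure ABARule (S : Type) where
  head : S
  body : S

/-- `Derives R a b`: there is a deduction (chain of rules in `R`) from `a` to `b`. -/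
def Derives {S : Type} (R : Set (ABARule S)) : S → S → Prop :=
  Relation.ReflTransGen fun a b => (⟨b, a⟩ : ABARule S) ∈ R

/-- `Δ` attacks `β` iff the contrary of `β` is deducible from some member of `Δ`. -/
def Attacks {S : Type} (co : S → S) (R : Set (ABARule S)) (Delta : Set S) (b : S) : Prop :=
  ∃ a ∈ Delta, Derives R a (co b)

/-- `Δ` attacks set `B` iff it attacks some member of `B`. -/
def AttacksSet {S : Type} (co : S → S) (R : Set (ABARule S)) (Delta B : Set S) : Prop :=
  ∃ b ∈ B, Attacks co R Delta b

/-- `Δ` is conflict-free iff it does not attack itself. -/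
def ConflictFree {S : Type} (co : S → S) (R : Set (ABARule S)) (Delta : Set S) : Prop :=
  ¬ AttacksSet co R Delta Delta

/-- Deductive closure of `Δ` within the assumptions `asm`. -/
def Cl {S : Type} (asm : Set S) (R : Set (ABARule S)) (Delta : Set S) : Set S :=
  {a | a ∈ asm ∧ ∃ d ∈ Delta, Derives R d a}

/-- `Δ` is closed iff `Δ = Cl(Δ)`. -/
def BABAClosed {S : Type} (asm : Set S) (R : Set (ABARule S)) (Delta : Set S) : Prop :=
  Cl asm R Delta = Delta

/-- Admissibility: closed, conflict-free, and counter-attacks every closed attacker. -/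
def Admissible {S : Type} (asm : Set S) (co : S → S) (R : Set (ABARule S))
    (Delta : Set S) : Prop :=
  Delta ⊆ asm ∧ BABAClosed asm R Delta ∧ ConflictFree co R Delta ∧
    ∀ B ⊆ asm, BABAClosed asm R B → AttacksSet co R B Delta → AttacksSet co R Delta B

/-- Preferred: ⊆-maximally admissible. -/
def Preferred {S : Type} (asm : Set S) (co : S → S) (R : Set (ABARule S))
    (Delta : Set S) : Prop :=
  Admissible asm co R Delta ∧
    ∀ D', Admissible asm co R D' → Delta ⊆ D' → D' = Delta

/-- `Δ` defends `α` iff `Δ` attacks every closed set attacking `α`. -/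
def Defends {S : Type} (asm : Set S) (co : S → S) (R : Set (ABARule S))
    (Delta : Set S) (a : S) : Prop :=
  ∀ B ⊆ asm, BABAClosed asm R B → Attacks co R B a → AttacksSet co R Delta B

/-- Complete: admissible and containing exactly the assumptions it defends. -/
def CompleteExt {S : Type} (asm : Set S) (co : S → S) (R : Set (ABARule S))
    (Delta : Set S) : Prop :=
  Admissible asm co R Delta ∧ Delta = {a | a ∈ asm ∧ Defends asm co R Delta a}

/-- Set-stable: closed, conflict-free, attacking `Cl({β})` for every `β` outside. -/
def SetStable {S : Type} (asm : Set S) (co : S → S) (R : Set (ABARule S))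
    (Delta : Set S) : Prop :=
  Delta ⊆ asm ∧ BABAClosed asm R Delta ∧ ConflictFree co R Delta ∧
    ∀ b ∈ asm, b ∉ Delta → AttacksSet co R Delta (Cl asm R {b})

/-- Well-founded extension: the intersection of all complete extensions. -/
def WellFoundedExt {S : Type} (asm : Set S) (co : S → S) (R : Set (ABARule S))
    (Delta : Set S) : Prop :=
  Delta = ⋂₀ {B | CompleteExt asm co R B}

/-- Ideal: ⊆-maximal among admissible sets contained in all preferred extensions. -/
def IdealExt {S : Type} (asm : Set S) (co : S → S) (R : Set (ABARule S))
    (Delta : Set S) : Prop :=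
  (Admissible asm co R Delta ∧ ∀ B, Preferred asm co R B → Delta ⊆ B) ∧
    ∀ D', (Admissible asm co R D' ∧ ∀ B, Preferred asm co R B → D' ⊆ B) →
      Delta ⊆ D' → D' = Delta

/-- Quota rule: keep the rules accepted by at least `q` agents. -/
def QuotaAgg {S : Type} {n : ℕ} (Rs : Fin n → Set (ABARule S)) (q : ℕ) :
    Set (ABARule S) :=
  {r | ∃ N' : Finset (Fin n), q ≤ N'.card ∧ ∀ i ∈ N', r ∈ Rs i}

/-- Oligarchic rule: keep the rules accepted by all veto agents. -/
def OligAgg {S : Type} {n : ℕ} (Rs : Fin n → Set (ABARule S)) (Nv : Set (Fin n)) :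
    Set (ABARule S) :=
  {r | ∀ j ∈ Nv, r ∈ Rs j}

abbrev Sen4 := Fin 4 ⊕ Fin 4

def cmap4 : Sen4 → Sen4
  | .inl i => .inr i
  | .inr i => .inr i

def asm4 : Set Sen4 := Set.range Sum.inl

def R10 : Set (ABARule Sen4) := {⟨.inr 2, .inl 0⟩, ⟨.inl 3, .inl 0⟩}

def r10a : ABARule Sen4 := ⟨.inr 1, .inl 2⟩
def r10b : ABARule Sen4 := ⟨.inr 0, .inl 1⟩
def r10c : ABARule Sen4 := ⟨.inr 2, .inl 3⟩

/-
Write A, B, C, D for the assumptions `inl 0, inl 1, inl 2, inl 3`, whose contraries are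
`inr 0, …, inr 3`. Every rule set `R10 ∪ T` is transitively closed (its only chain
A → D → C̄ is shortcut by the rule C̄ ← A), so deductions are single rules and attacks go
between single assumptions: A attacks C, and when R_1, R_2, R_3 (`r10a`, `r10b`, `r10c`) are
present, C attacks B, B attacks A and D attacks C. Because attacks come from single assumptions,
a set is admissible once it counter-attacks every assumption attacking it, and it is preferred
once adding any other assumption creates a conflict. This gives the preferred extensions
{A, B, D} without R_2, {B, D} with R_2 and R_3, and {B, C, D} with R_2 alone. With R_1 and R_2
alone, an admissible set containing B has to counter-attack the closed attacker {C}. Only A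
attacks C, and B attacks A.
-/

section General

variable {S : Type} {asm : Set S} {co : S → S} {R : Set (ABARule S)} {Δ : Set S}

theorem derives_iff_of_trans (htrans : ∀ {a b c : S}, ⟨b, a⟩ ∈ R → ⟨c, b⟩ ∈ R → ⟨c, a⟩ ∈ R)
    {a b : S} : Derives R a b ↔ a = b ∨ ⟨b, a⟩ ∈ R := by
  have : IsTrans S fun a b => (⟨b, a⟩ : ABARule S) ∈ R := ⟨fun _ _ _ => htrans⟩
  rw [Derives, Relation.reflTransGen_eq_reflGen, Relation.reflGen_iff, eq_comm]

theorem conflictFree_iff : ConflictFree co R Δ ↔ ∀ a ∈ Δ, ∀ b ∈ Δ, ¬ Derives R a (co b) := by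
  simp only [ConflictFree, AttacksSet, Attacks]
  grind

theorem ConflictFree.anti {Δ' : Set S} (h : ConflictFree co R Δ') (hs : Δ ⊆ Δ') :
    ConflictFree co R Δ := by
  rw [conflictFree_iff] at *
  exact fun a ha b hb => h a (hs ha) b (hs hb)

theorem babaClosed_of_forall_derives (hsub : Δ ⊆ asm)
    (h : ∀ d ∈ Δ, ∀ a ∈ asm, Derives R d a → a ∈ Δ) : BABAClosed asm R Δ :=
  Set.Subset.antisymm (fun _ ⟨ha, _, hd, hda⟩ => h _ hd _ ha hda)
    fun a ha => ⟨hsub ha, a, ha, Relation.ReflTransGen.refl⟩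

theorem admissible_of_counterattacks (hsub : Δ ⊆ asm) (hcl : BABAClosed asm R Δ)
    (hcf : ConflictFree co R Δ)
    (hdef : ∀ b ∈ asm, ∀ a ∈ Δ, Derives R b (co a) → ∃ c ∈ Δ, Derives R c (co b)) :
    Admissible asm co R Δ :=
  ⟨hsub, hcl, hcf, fun _ hB _ ⟨a, ha, b, hb, hba⟩ => ⟨b, hb, hdef b (hB hb) a ha hba⟩⟩

theorem Admissible.preferred_of_not_conflictFree_insert (h : Admissible asm co R Δ)
    (hmax : ∀ a ∈ asm, a ∉ Δ → ¬ ConflictFree co R (insert a Δ)) : Preferred asm co R Δ := by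
  refine ⟨h, fun Δ' h' hs => Set.Subset.antisymm (fun a ha => ?_) hs⟩
  by_contra haΔ
  exact hmax a (h'.1 ha) haΔ (h'.2.2.1.anti (Set.insert_subset ha hs))

end General

theorem mem_iff_of_subset_triple {α : Type*} {T : Set α} {a b c r : α} (hT : T ⊆ {a, b, c}) :
    r ∈ T ↔ (r = a ∧ a ∈ T) ∨ (r = b ∧ b ∈ T) ∨ (r = c ∧ c ∈ T) := by
  constructor
  · intro hr
    rcases hT hr with rfl | rfl | rfl <;> simp [hr]
  · rintro (⟨rfl, h⟩ | ⟨rfl, h⟩ | ⟨rfl, h⟩) <;> exact h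

section Witness

variable {T : Set (ABARule Sen4)}

theorem mem_R10_union_iff (hT : T ⊆ {r10a, r10b, r10c}) {x y : Sen4} :
    (⟨y, x⟩ : ABARule Sen4) ∈ R10 ∪ T ↔
      (x = .inl 0 ∧ y = .inr 2) ∨ (x = .inl 0 ∧ y = .inl 3) ∨
      (x = .inl 2 ∧ y = .inr 1 ∧ r10a ∈ T) ∨ (x = .inl 1 ∧ y = .inr 0 ∧ r10b ∈ T) ∨
      (x = .inl 3 ∧ y = .inr 2 ∧ r10c ∈ T) := by
  rw [Set.mem_union, mem_iff_of_subset_triple hT]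
  simp only [R10, r10a, r10b, r10c, Set.mem_insert_iff, Set.mem_singleton_iff, ABARule.mk.injEq]
  tauto

theorem derives_R10_union_iff (hT : T ⊆ {r10a, r10b, r10c}) {x y : Sen4} :
    Derives (R10 ∪ T) x y ↔ x = y ∨ (⟨y, x⟩ : ABARule Sen4) ∈ R10 ∪ T := by
  refine derives_iff_of_trans fun h₁ h₂ => ?_
  rw [mem_R10_union_iff hT] at *
  grind

theorem derives_inl_inl (hT : T ⊆ {r10a, r10b, r10c}) {i j : Fin 4} :
    Derives (R10 ∪ T) (.inl i) (.inl j) ↔ i = j ∨ (i = 0 ∧ j = 3) := by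
  simp [derives_R10_union_iff hT, mem_R10_union_iff hT]

theorem derives_inl_inr (hT : T ⊆ {r10a, r10b, r10c}) {i j : Fin 4} :
    Derives (R10 ∪ T) (.inl i) (.inr j) ↔
      (i = 0 ∧ j = 2) ∨ (i = 2 ∧ j = 1 ∧ r10a ∈ T) ∨ (i = 1 ∧ j = 0 ∧ r10b ∈ T) ∨
        (i = 3 ∧ j = 2 ∧ r10c ∈ T) := by
  simp [derives_R10_union_iff hT, mem_R10_union_iff hT]

theorem preferred_ABD (hT : T ⊆ {r10a, r10b, r10c}) (hb : r10b ∉ T) :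
    Preferred asm4 cmap4 (R10 ∪ T) {.inl 0, .inl 1, .inl 3} := by
  have hsub : ({.inl 0, .inl 1, .inl 3} : Set Sen4) ⊆ asm4 := by
    simp [asm4, Set.insert_subset_iff]
  refine Admissible.preferred_of_not_conflictFree_insert
    (admissible_of_counterattacks hsub (babaClosed_of_forall_derives hsub ?_) ?_ ?_) ?_
  all_goals
    simp [asm4, conflictFree_iff, cmap4, derives_inl_inl hT, derives_inl_inr hT, hb] <;> omega

theorem preferred_BD (hT : T ⊆ {r10a, r10b, r10c}) (hb : r10b ∈ T) (hc : r10c ∈ T) :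
    Preferred asm4 cmap4 (R10 ∪ T) {.inl 1, .inl 3} := by
  have hsub : ({.inl 1, .inl 3} : Set Sen4) ⊆ asm4 := by
    simp [asm4, Set.insert_subset_iff]
  refine Admissible.preferred_of_not_conflictFree_insert
    (admissible_of_counterattacks hsub (babaClosed_of_forall_derives hsub ?_) ?_ ?_) ?_
  all_goals
    simp [asm4, conflictFree_iff, cmap4, derives_inl_inl hT, derives_inl_inr hT, hb, hc] <;> omega

theorem preferred_BCD (hT : T ⊆ {r10a, r10b, r10c}) (ha : r10a ∉ T) (hb : r10b ∈ T)
    (hc : r10c ∉ T) : Preferred asm4 cmap4 (R10 ∪ T) {.inl 1, .inl 2, .inl 3} := by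
  have hsub : ({.inl 1, .inl 2, .inl 3} : Set Sen4) ⊆ asm4 := by
    simp [asm4, Set.insert_subset_iff]
  refine Admissible.preferred_of_not_conflictFree_insert
    (admissible_of_counterattacks hsub (babaClosed_of_forall_derives hsub ?_) ?_ ?_) ?_
  all_goals
    simp [asm4, conflictFree_iff, cmap4, derives_inl_inl hT, derives_inl_inr hT, ha, hb, hc] <;>
      omega

theorem inl_one_notMem_of_admissible (hT : T ⊆ {r10a, r10b, r10c}) (ha : r10a ∈ T)
    (hb : r10b ∈ T) (hc : r10c ∉ T) {Δ : Set Sen4} (h : Admissible asm4 cmap4 (R10 ∪ T) Δ) :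
    (.inl 1 : Sen4) ∉ Δ := by
  intro hB
  have hCsub : ({.inl 2} : Set Sen4) ⊆ asm4 := by simp [asm4]
  have hCclosed : BABAClosed asm4 (R10 ∪ T) {.inl 2} :=
    babaClosed_of_forall_derives hCsub (by simp [asm4, derives_inl_inl hT])
  obtain ⟨_, rfl, a, haΔ, haC⟩ := h.2.2.2 _ hCsub hCclosed
    ⟨.inl 1, hB, .inl 2, rfl, by simp [cmap4, derives_inl_inr hT, ha]⟩
  obtain ⟨i, rfl⟩ := h.1 haΔ
  have hA : (.inl 0 : Sen4) ∈ Δ := by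
    simp only [cmap4, derives_inl_inr hT, hc] at haC
    grind
  exact conflictFree_iff.1 h.2.2.1 _ hB _ hA (by simp [cmap4, derives_inl_inr hT, hb])

end Witness

theorem preferredAcceptability_implicative :
    ∀ T ⊆ ({r10a, r10b, r10c} : Set (ABARule Sen4)),
      (T ≠ {r10a, r10b} →
        ∃ Delta, Preferred asm4 cmap4 (R10 ∪ T) Delta ∧ (Sum.inl 1 : Sen4) ∈ Delta) ∧
      (T = {r10a, r10b} →
        ∀ Delta, Preferred asm4 cmap4 (R10 ∪ T) Delta → (Sum.inl 1 : Sen4) ∉ Delta) := by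
  intro T hT
  refine ⟨fun hne => ?_, ?_⟩
  · by_cases hb : r10b ∈ T
    · by_cases hc : r10c ∈ T
      · exact ⟨_, preferred_BD hT hb hc, by simp⟩
      · have ha : r10a ∉ T := fun ha => hne <| by
          ext r
          rw [mem_iff_of_subset_triple hT]
          simp [ha, hb, hc]
        exact ⟨_, preferred_BCD hT ha hb hc, by simp⟩
    · exact ⟨_, preferred_ABD hT hb, by simp⟩
  · rintro rfl Δ hΔ
    exact inl_one_notMem_of_admissible (by simp [Set.insert_subset_iff]) (by simp) (by simp)
      (by simp [r10a, r10b, r10c]) hΔ.1
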